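/- A finite simple graph G admits a like-geometric product set-labeling if and only if G is bipartite. -/

import Mathlib

open Pointwise

/-- A finite set of positive integers is a geometric progression (with integer first term
`a > 0` and integer common ratio `r ≥ 2`). -/
def IsGeomProg (A : Finset ℕ) : Prop :=
  ∃ a r : ℕ, 0 < a ∧ 2 ≤ r ∧ A = (Finset.range A.card).image (fun i => a * r ^ i)

/-!
Along an edge of a like-geometric labeling the ratio is raised to the power `k`, so the
number `Ω r` of prime factors of the ratio is multiplied by `k` and the parity of
`log_k (Ω r)` alternates: this is a 2-colouring. Conversely, give the colour classes the
ratios `2` and `4`; then `{a, 2a} * {b, 4b} = {ab, 2ab, 4ab, 8ab}`.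
-/

open ArithmeticFunction ArithmeticFunction.Omega

theorem Nat.log_cardFactors_pow {k n : ℕ} (hk : 1 < k) (hn : 1 < n) :
    Nat.log k (Ω (n ^ k)) = Nat.log k (Ω n) + 1 := by
  rw [cardFactors_pow, mul_comm, Nat.log_mul_base hk (cardFactors_pos_iff_one_lt.2 hn).ne']

namespace SimpleGraph

variable {V : Type*} {G : SimpleGraph V}

theorem colorable_two_of_adj_succ (g : V → ℕ)
    (hg : ∀ u v, G.Adj u v → g v = g u + 1 ∨ g u = g v + 1) : G.Colorable 2 :=
  ⟨Coloring.mk (fun v => (⟨g v % 2, Nat.mod_lt _ two_pos⟩ : Fin 2)) fun {u v} huv => by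
    have := hg u v huv
    simp only [ne_eq, Fin.mk.injEq]
    omega⟩

theorem colorable_two_of_adj_eq_pow {r : V → ℕ} {k : ℕ} (hr : ∀ v, 1 < r v) (hk : 1 < k)
    (hadj : ∀ u v, G.Adj u v → r v = r u ^ k ∨ r u = r v ^ k) : G.Colorable 2 :=
  colorable_two_of_adj_succ (fun v => Nat.log k (Ω (r v))) fun u v huv => by
    rcases hadj u v huv with h | h
    · exact .inl (h ▸ Nat.log_cardFactors_pow hk (hr u))
    · exact .inr (h ▸ Nat.log_cardFactors_pow hk (hr v))

end SimpleGraph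

def geomProg (a r n : ℕ) : Finset ℕ :=
  (Finset.range n).image fun i => a * r ^ i

section geomProg

variable {a b r m n x : ℕ}

theorem mem_geomProg : x ∈ geomProg a r n ↔ ∃ i < n, a * r ^ i = x := by
  simp [geomProg]

theorem self_mem_geomProg (hn : 0 < n) : a ∈ geomProg a r n :=
  mem_geomProg.2 ⟨0, hn, by simp⟩

theorem le_of_mem_geomProg (hr : 0 < r) (hx : x ∈ geomProg a r n) : a ≤ x := by
  obtain ⟨i, -, rfl⟩ := mem_geomProg.1 hx
  exact Nat.le_mul_of_pos_right a (pow_pos hr i)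

theorem eq_of_geomProg_eq {s : ℕ} (hn : 0 < n) (hr : 0 < r) (hs : 0 < s)
    (h : geomProg a r n = geomProg b s n) : a = b :=
  le_antisymm (le_of_mem_geomProg hr (h ▸ self_mem_geomProg hn : b ∈ geomProg a r n))
    (le_of_mem_geomProg hs (h ▸ self_mem_geomProg hn : a ∈ geomProg b s n))

theorem card_geomProg (ha : 0 < a) (hr : 2 ≤ r) : (geomProg a r n).card = n := by
  refine (Finset.card_image_of_injective _ fun i j hij => ?_).trans (Finset.card_range n)
  exact Nat.pow_right_injective hr (Nat.eq_of_mul_eq_mul_left ha hij)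

theorem isGeomProg_geomProg (ha : 0 < a) (hr : 2 ≤ r) : IsGeomProg (geomProg a r n) :=
  ⟨a, r, ha, hr, by rw [card_geomProg ha hr]; rfl⟩

/-- Writing exponents below `m * n` in base `m`. -/
theorem geomProg_mul_geomProg_pow :
    geomProg a r m * geomProg b (r ^ m) n = geomProg (a * b) r (m * n) := by
  ext x
  simp only [Finset.mem_mul, mem_geomProg]
  constructor
  · rintro ⟨_, ⟨i, hi, rfl⟩, _, ⟨j, hj, rfl⟩, rfl⟩
    refine ⟨i + m * j, by nlinarith, by rw [pow_add, pow_mul]; ring⟩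
  · rintro ⟨l, hl, rfl⟩
    have hm : 0 < m := Nat.pos_of_mul_pos_right (Nat.zero_lt_of_lt hl)
    refine ⟨_, ⟨l % m, Nat.mod_lt l hm, rfl⟩, _, ⟨l / m, Nat.div_lt_of_lt_mul hl, rfl⟩, ?_⟩
    rw [← pow_mul, mul_mul_mul_comm, ← pow_add, Nat.mod_add_div]

theorem isGeomProg_geomProg_mul_geomProg_pow (ha : 0 < a) (hb : 0 < b) (hr : 2 ≤ r) :
    IsGeomProg (geomProg a r m * geomProg b (r ^ m) n) :=
  geomProg_mul_geomProg_pow ▸ isGeomProg_geomProg (Nat.mul_pos ha hb) hr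

end geomProg

/-- A finite simple graph `G` admits a like-geometric product
set-labeling (an injective labeling `f` by nonempty finite sets of positive integers such
that each vertex label is a geometric progression with integer common ratio `rv v ≥ 2`
and `|f v| ≥ 2`, every edge label is a geometric progression, and there is a common
characteristic index `k > 1` with `rv v = (rv u)^k` or `rv u = (rv v)^k` for every edge
`uv`) iff `G` is bipartite. -/
theorem likeGeometric_iff_bipartite {V : Type*} [Fintype V] (G : SimpleGraph V) :
    (∃ (f : V → Finset ℕ) (rv av : V → ℕ) (k : ℕ),
      Function.Injective f ∧
      (∀ v, 2 ≤ rv v) ∧ (∀ v, 0 < av v) ∧ (∀ v, 2 ≤ (f v).card) ∧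
      (∀ v, f v = (Finset.range (f v).card).image (fun i => av v * (rv v) ^ i)) ∧
      (∀ u v, G.Adj u v → IsGeomProg (f u * f v)) ∧
      1 < k ∧
      (∀ u v, G.Adj u v → (rv v = (rv u) ^ k ∨ rv u = (rv v) ^ k))) ↔
    G.Colorable 2 := by
  constructor
  · rintro ⟨-, rv, -, k, -, hrv, -, -, -, -, hk, hratio⟩
    exact SimpleGraph.colorable_two_of_adj_eq_pow hrv hk hratio
  · rintro ⟨C⟩
    obtain ⟨a, ha, ha_inj⟩ : ∃ a : V → ℕ, (∀ v, 0 < a v) ∧ a.Injective :=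
      ⟨fun v => Fintype.equivFin V v + 1, fun _ => Nat.succ_pos _,
        Nat.succ_injective.comp (Fin.val_injective.comp (Fintype.equivFin V).injective)⟩
    let r (v : V) : ℕ := 2 ^ 2 ^ (C v : ℕ)
    have hr (v : V) : 2 ≤ r v := Nat.le_self_pow (by positivity) 2
    have hratio (u v : V) (huv : G.Adj u v) : r v = r u ^ 2 ∨ r u = r v ^ 2 := by
      have : (C v : ℕ) = C u + 1 ∨ (C u : ℕ) = C v + 1 := by
        have := Fin.val_ne_of_ne (C.valid huv); omega
      rcases this with h | h
      · exact .inl (by simp only [r, h, pow_succ, pow_mul])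
      · exact .inr (by simp only [r, h, pow_succ, pow_mul])
    refine ⟨fun v => geomProg (a v) (r v) 2, r, a, 2,
      fun u v h => ha_inj (eq_of_geomProg_eq two_pos (two_pos.trans_le (hr u))
        (two_pos.trans_le (hr v)) h), hr, ha,
      fun v => (card_geomProg (ha v) (hr v)).ge,
      fun v => by rw [card_geomProg (ha v) (hr v)]; rfl, fun u v huv => ?_, one_lt_two, hratio⟩
    rcases hratio u v huv with h | h
    · simpa only [h] using isGeomProg_geomProg_mul_geomProg_pow (ha u) (ha v) (hr u)
    · rw [mul_comm]
      simpa only [h] using isGeomProg_geomProg_mul_geomProg_pow (ha v) (ha u) (hr v)
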